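/- Let r₀ > 0, let h : [0, r₀) → ℝ be increasing with 0 < h(r) ≤ r for all r ∈ (0, r₀), and let E ⊆ ℂ be a closed set that is h-uniformly perfect with constant r₀. Then for every a ∈ E, every r ∈ (0, r₀) and every c̃ ∈ (0, 1/2), there exist points b₁, b₂ ∈ E such that the closed discs B₁ = B̄(b₁, c̃·h(r/2)) and B₂ = B̄(b₂, c̃·h(r/2)) satisfy B₁ ⊆ B̄(a,r), B₂ ⊆ B̄(a,r), and B₁ ∩ B₂ = ∅. -/
import Mathlib


open Metric Set

/-- Lemma 5.1: if `E` is `h`-uniformly perfect with constant `r₀`, then inside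
every disc `B̄(a,r)` with `a ∈ E`, `r ∈ (0,r₀)`, and for every
`c̃ ∈ (0,1/2)`, one finds two disjoint closed discs of radius `c̃·h(r/2)`
centered at points of `E`. -/
theorem stmt_17 (r₀ : ℝ) (hr₀ : 0 < r₀) (h : ℝ → ℝ)
    (hmono : MonotoneOn h (Set.Ico (0 : ℝ) r₀))
    (hpos : ∀ r ∈ Set.Ioo (0 : ℝ) r₀, 0 < h r)
    (hle : ∀ r ∈ Set.Ioo (0 : ℝ) r₀, h r ≤ r)
    (E : Set ℂ) (hcl : IsClosed E)
    (hup : ∀ a ∈ E, ∀ r ∈ Set.Ioo (0 : ℝ) r₀,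
      ({z : ℂ | h r ≤ dist z a ∧ dist z a ≤ r} ∩ E).Nonempty) :
    ∀ a ∈ E, ∀ r ∈ Set.Ioo (0 : ℝ) r₀, ∀ c ∈ Set.Ioo (0 : ℝ) (1 / 2),
      ∃ b₁ ∈ E, ∃ b₂ ∈ E,
        closedBall b₁ (c * h (r / 2)) ⊆ closedBall a r ∧
        closedBall b₂ (c * h (r / 2)) ⊆ closedBall a r ∧
        closedBall b₁ (c * h (r / 2)) ∩ closedBall b₂ (c * h (r / 2)) = ∅ := by
  intro a ha r hr c hc
  obtain ⟨hr0, hrr⟩ := hr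
  obtain ⟨hc0, hc2⟩ := hc
  have hr2 : r / 2 ∈ Set.Ioo (0:ℝ) r₀ := ⟨by linarith, by linarith⟩
  have hh0 : 0 < h (r/2) := hpos _ hr2
  have hhle : h (r/2) ≤ r/2 := hle _ hr2
  obtain ⟨b, ⟨hb1, hb2⟩, hbE⟩ := hup a ha (r/2) hr2
  refine ⟨a, ha, b, hbE, ?_, ?_, ?_⟩
  · intro z hz
    simp only [mem_closedBall] at *
    nlinarith
  · intro z hz
    simp only [mem_closedBall] at *
    have := dist_triangle z b a
    nlinarith
  · ext z
    simp only [Set.mem_inter_iff, mem_closedBall, Set.mem_empty_iff_false, iff_false, not_and]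
    intro h1 h2
    have := dist_triangle b z a
    have h3 : dist b z = dist z b := dist_comm b z
    nlinarith
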